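/- Every isometry A ∈ Isom(L_z) with A(Fix κ₃) = Fix(κ₃) restricts on Fix(κ₃) to a signed permutation of the basis (v₁, v₂), i.e., A(v₁) = ε₁·v_{τ(1)} and A(v₂) = ε₂·v_{τ(2)} for some permutation τ of {1, 2} and signs ε₁, ε₂ ∈ {1, −1}; conversely, each of the eight signed permutations of (v₁, v₂) is realized by some A ∈ Isom(L_z) with A(Fix κ₃) = Fix(κ₃). Hence the setwise stabilizer of Fix(κ₃) in Isom(L_z) acts on Fix(κ₃) through a group isomorphic to the dihedral group of order 8. -/
import Mathlib


/-- The imaginary unit `i` in the Gaussian integers `ℤ[i]`. -/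
def gi : GaussianInt := Zsqrtd.sqrtd

/-- The underlying `ℤ[i]`-module of the Gaussian lattice `L_z`. -/
abbrev Lz : Type := GaussianInt × GaussianInt

/-- The Hermitian form of `L_z`, given by the matrix `[[-2, 1-i], [1+i, -2]]`;
conjugate-linear in the first argument, linear in the second. -/
def hz (x y : Lz) : GaussianInt :=
  star x.1 * (-2) * y.1 + star x.1 * (1 - gi) * y.2 +
    star x.2 * (1 + gi) * y.1 + star x.2 * (-2) * y.2

/-- An isometry of `L_z`: a `ℤ[i]`-linear bijection preserving the form `hz`. -/
def IsIsomLz (A : Lz → Lz) : Prop :=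
  Function.Bijective A ∧ (∀ x y : Lz, A (x + y) = A x + A y) ∧
    (∀ (c : GaussianInt) (x : Lz), A (c • x) = c • A x) ∧
    ∀ x y : Lz, hz (A x) (A y) = hz x y

/-- An involutive anti-isometry of `L_z`: an additive bijection `ν` with
`ν (c • v) = c̄ • ν v`, `hz (ν x) (ν y) = conj (hz x y)` and `ν ∘ ν = id`. -/
def IsInvAntiIsomLz (ν : Lz → Lz) : Prop :=
  Function.Bijective ν ∧ (∀ x y : Lz, ν (x + y) = ν x + ν y) ∧
    (∀ (c : GaussianInt) (x : Lz), ν (c • x) = star c • ν x) ∧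
    (∀ x y : Lz, hz (ν x) (ν y) = star (hz x y)) ∧
    ∀ x : Lz, ν (ν x) = x

/-- The anti-isometry `κ₁ : (x₁, x₂) ↦ (−x̄₂, −x̄₁)` of `L_z`. -/
def kappa1 (x : Lz) : Lz := (-(star x.2), -(star x.1))

/-- The anti-isometry `κ₃ : (x₁, x₂) ↦ (i·x̄₁, −x̄₂)` of `L_z`. -/
def kappa3 (x : Lz) : Lz := (gi * star x.1, -(star x.2))

/-- The `ℤ[i]`-linear map on `Lz` given by a `2 × 2` matrix. -/
def matMap (a b c d : GaussianInt) (x : Lz) : Lz := (a*x.1 + b*x.2, c*x.1 + d*x.2)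

theorem good_matMap (a b c d a' b' c' d' : GaussianInt)
    (H : (a'*a + b'*c = 1 ∧ a'*b + b'*d = 0 ∧ c'*a + d'*c = 0 ∧ c'*b + d'*d = 1) ∧
      (a*a' + b*c' = 1 ∧ a*b' + b*d' = 0 ∧ c*a' + d*c' = 0 ∧ c*b' + d*d' = 1) ∧
      (star a * (-2) * a + star a * (1-gi) * c + star c * (1+gi) * a + star c * (-2) * c = -2 ∧
       star a * (-2) * b + star a * (1-gi) * d + star c * (1+gi) * b + star c * (-2) * d = 1 - gi ∧
       star b * (-2) * a + star b * (1-gi) * c + star d * (1+gi) * a + star d * (-2) * c = 1 + gi ∧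
       star b * (-2) * b + star b * (1-gi) * d + star d * (1+gi) * b + star d * (-2) * d = -2) ∧
      (a * gi = gi * star a ∧ -b = gi * star b ∧ c * gi = -star c ∧ star d = d)) :
    IsIsomLz (matMap a b c d) ∧
      matMap a b c d '' {w : Lz | kappa3 w = w} = {w : Lz | kappa3 w = w} := by
  obtain ⟨⟨h1, h2, h3, h4⟩, ⟨h5, h6, h7, h8⟩, ⟨E11, E12, E21, E22⟩, ⟨K1, K2, K3, K4⟩⟩ := H
  have hbij : Function.Bijective (matMap a b c d) := by
    apply Function.bijective_iff_has_inverse.mpr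
    refine ⟨matMap a' b' c' d', fun x => ?_, fun x => ?_⟩
    · simp only [matMap]
      refine Prod.ext ?_ ?_ <;> simp only []
      · linear_combination x.1 * h1 + x.2 * h2
      · linear_combination x.1 * h3 + x.2 * h4
    · simp only [matMap]
      refine Prod.ext ?_ ?_ <;> simp only []
      · linear_combination x.1 * h5 + x.2 * h6
      · linear_combination x.1 * h7 + x.2 * h8
  have hiso : IsIsomLz (matMap a b c d) := by
    refine ⟨hbij, ?_, ?_, ?_⟩
    · intro x y
      simp only [matMap, Prod.ext_iff, Prod.fst_add, Prod.snd_add]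
      constructor <;> ring
    · intro c x
      simp only [matMap, Prod.smul_fst, Prod.smul_snd, smul_eq_mul, Prod.ext_iff]
      constructor <;> ring
    · intro x y
      simp only [hz, matMap, star_add, star_mul]
      linear_combination (star x.1 * y.1) * E11 + (star x.1 * y.2) * E12 +
        (star x.2 * y.1) * E21 + (star x.2 * y.2) * E22
  have hcomm : ∀ x, matMap a b c d (kappa3 x) = kappa3 (matMap a b c d x) := by
    intro x
    simp only [matMap, kappa3, star_add, star_mul]
    refine Prod.ext ?_ ?_ <;> simp only []
    · linear_combination star x.1 * K1 + star x.2 * K2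
    · linear_combination star x.1 * K3 + star x.2 * K4
  refine ⟨hiso, ?_⟩
  ext w
  constructor
  · rintro ⟨u, hu, rfl⟩
    show kappa3 _ = _
    rw [← hcomm, hu]
  · intro hw
    obtain ⟨u, rfl⟩ := hbij.2 w
    refine ⟨u, ?_, rfl⟩
    show kappa3 u = u
    apply hbij.1
    rw [hcomm]; exact hw

theorem unit_cases (p s : ℤ) (h : 2*(p^2 + (p-s)^2) = 2) :
    (p = 1 ∧ s = 1) ∨ (p = -1 ∧ s = -1) ∨ (p = 0 ∧ s = -1) ∨ (p = 0 ∧ s = 1) := by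
  have h' : p^2 + (p-s)^2 = 1 := by linarith
  have hp1 : -1 ≤ p := by nlinarith [sq_nonneg (p-s)]
  have hp2 : p ≤ 1 := by nlinarith [sq_nonneg (p-s)]
  have hs1 : -2 ≤ s := by nlinarith [sq_nonneg p, sq_nonneg (p + (p-s))]
  have hs2 : s ≤ 2 := by nlinarith [sq_nonneg p, sq_nonneg (p + (p-s))]
  interval_cases p <;> interval_cases s <;> omega

theorem fwd_aux :
    ∀ A : Lz → Lz, IsIsomLz A → A '' {w : Lz | kappa3 w = w} = {w : Lz | kappa3 w = w} →
      ∃ τ : Equiv.Perm (Fin 2), ∃ ε : Fin 2 → GaussianInt,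
        (∀ j, ε j = 1 ∨ ε j = -1) ∧
        ∀ j, A ((![(1 + gi, gi), (0, -gi)] : Fin 2 → Lz) j)
          = ε j • (![(1 + gi, gi), (0, -gi)] : Fin 2 → Lz) (τ j) := by
  intro A hA hFix
  obtain ⟨hbij, hadd, hsmul, hhz⟩ := hA
  have m1 : kappa3 (A (1 + gi, gi)) = A (1 + gi, gi) := by
    have hmem : A (1 + gi, gi) ∈ A '' {w : Lz | kappa3 w = w} :=
      ⟨(1 + gi, gi), by decide, rfl⟩
    rw [hFix] at hmem; exact hmem
  have m2 : kappa3 (A (0, -gi)) = A (0, -gi) := by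
    have hmem : A (0, -gi) ∈ A '' {w : Lz | kappa3 w = w} :=
      ⟨(0, -gi), by decide, rfl⟩
    rw [hFix] at hmem; exact hmem
  have hz11 := hhz (1 + gi, gi) (1 + gi, gi)
  have hz12 := hhz (1 + gi, gi) (0, -gi)
  have hz22 := hhz (0, -gi) (0, -gi)
  rw [show hz ((1 + gi, gi) : Lz) (1 + gi, gi) = (⟨-2, 0⟩ : GaussianInt) from by decide] at hz11
  rw [show hz ((1 + gi, gi) : Lz) (0, -gi) = (⟨0, 0⟩ : GaussianInt) from by decide] at hz12
  rw [show hz ((0, -gi) : Lz) (0, -gi) = (⟨-2, 0⟩ : GaussianInt) from by decide] at hz22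
  rcases h1 : A ((1 + gi, gi) : Lz) with ⟨⟨p, p'⟩, s0, s⟩
  rcases h2 : A ((0, -gi) : Lz) with ⟨⟨q, q'⟩, t0, t⟩
  rw [h1] at m1 hz11 hz12
  rw [h2] at m2 hz12 hz22
  simp only [kappa3, Prod.ext_iff, Zsqrtd.ext_iff, Zsqrtd.star_mk, gi] at m1 m2
  obtain ⟨⟨a1, a2⟩, a3, a4⟩ := m1
  obtain ⟨⟨b1, b2⟩, b3, b4⟩ := m2
  simp at a1 a2 a3 a4 b1 b2 b3 b4
  subst a1 b1
  obtain rfl : s0 = 0 := by omega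
  obtain rfl : t0 = 0 := by omega
  have E1 := congrArg Zsqrtd.re hz11
  have E2 := congrArg Zsqrtd.re hz22
  have E3 := congrArg Zsqrtd.re hz12
  simp only [hz, gi, Zsqrtd.star_mk] at E1 E2 E3
  simp at E1 E2 E3
  ring_nf at E1 E2 E3
  have U1 := unit_cases p' s (by linear_combination -E1)
  have U2 := unit_cases q' t (by linear_combination -E2)
  have O : 2*(p'*q' + (p'-s)*(q'-t)) = 0 := by linear_combination -E3
  rcases U1 with ⟨rfl, rfl⟩ | ⟨rfl, rfl⟩ | ⟨rfl, rfl⟩ | ⟨rfl, rfl⟩ <;>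
    rcases U2 with ⟨rfl, rfl⟩ | ⟨rfl, rfl⟩ | ⟨rfl, rfl⟩ | ⟨rfl, rfl⟩
  · exact absurd O (by decide)
  · exact absurd O (by decide)
  · refine ⟨1, ![1, 1], by decide, ?_⟩
    rw [Fin.forall_fin_two]
    constructor
    · show A (1 + gi, gi) = _
      rw [h1]; decide
    · show A (0, -gi) = _
      rw [h2]; decide
  · refine ⟨1, ![1, (-1)], by decide, ?_⟩
    rw [Fin.forall_fin_two]
    constructor
    · show A (1 + gi, gi) = _
      rw [h1]; decide
    · show A (0, -gi) = _
      rw [h2]; decide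
  · exact absurd O (by decide)
  · exact absurd O (by decide)
  · refine ⟨1, ![(-1), 1], by decide, ?_⟩
    rw [Fin.forall_fin_two]
    constructor
    · show A (1 + gi, gi) = _
      rw [h1]; decide
    · show A (0, -gi) = _
      rw [h2]; decide
  · refine ⟨1, ![(-1), (-1)], by decide, ?_⟩
    rw [Fin.forall_fin_two]
    constructor
    · show A (1 + gi, gi) = _
      rw [h1]; decide
    · show A (0, -gi) = _
      rw [h2]; decide
  · refine ⟨Equiv.swap 0 1, ![1, 1], by decide, ?_⟩
    rw [Fin.forall_fin_two]
    constructor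
    · show A (1 + gi, gi) = _
      rw [h1]; decide
    · show A (0, -gi) = _
      rw [h2]; decide
  · refine ⟨Equiv.swap 0 1, ![1, (-1)], by decide, ?_⟩
    rw [Fin.forall_fin_two]
    constructor
    · show A (1 + gi, gi) = _
      rw [h1]; decide
    · show A (0, -gi) = _
      rw [h2]; decide
  · exact absurd O (by decide)
  · exact absurd O (by decide)
  · refine ⟨Equiv.swap 0 1, ![(-1), 1], by decide, ?_⟩
    rw [Fin.forall_fin_two]
    constructor
    · show A (1 + gi, gi) = _
      rw [h1]; decide
    · show A (0, -gi) = _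
      rw [h2]; decide
  · refine ⟨Equiv.swap 0 1, ![(-1), (-1)], by decide, ?_⟩
    rw [Fin.forall_fin_two]
    constructor
    · show A (1 + gi, gi) = _
      rw [h1]; decide
    · show A (0, -gi) = _
      rw [h2]; decide
  · exact absurd O (by decide)
  · exact absurd O (by decide)


theorem bwd_aux : ∀ τ : Equiv.Perm (Fin 2), ∀ ε : Fin 2 → GaussianInt,
    (∀ j, ε j = 1 ∨ ε j = -1) →
    ∃ A : Lz → Lz, IsIsomLz A ∧
      A '' {w : Lz | kappa3 w = w} = {w : Lz | kappa3 w = w} ∧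
      ∀ j, A ((![(1 + gi, gi), (0, -gi)] : Fin 2 → Lz) j)
        = ε j • (![(1 + gi, gi), (0, -gi)] : Fin 2 → Lz) (τ j) := by
  intro τ ε hε
  have hτ := (by decide : ∀ σ : Equiv.Perm (Fin 2), σ = 1 ∨ σ = Equiv.swap 0 1) τ
  have hε0 := hε 0
  have hε1 := hε 1
  rcases hτ with rfl | rfl <;> rcases hε0 with hε0 | hε0 <;> rcases hε1 with hε1 | hε1
  · obtain ⟨hiso, him⟩ := good_matMap 1 0 0 1 1 0 0 1 (by decide)
    refine ⟨_, hiso, him, ?_⟩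
    rw [Fin.forall_fin_two, hε0, hε1]
    constructor <;> decide
  · obtain ⟨hiso, him⟩ := good_matMap 1 0 (1+gi) (-1) 1 0 (1+gi) (-1) (by decide)
    refine ⟨_, hiso, him, ?_⟩
    rw [Fin.forall_fin_two, hε0, hε1]
    constructor <;> decide
  · obtain ⟨hiso, him⟩ := good_matMap (-1) 0 (-(1+gi)) 1 (-1) 0 (-(1+gi)) 1 (by decide)
    refine ⟨_, hiso, him, ?_⟩
    rw [Fin.forall_fin_two, hε0, hε1]
    constructor <;> decide
  · obtain ⟨hiso, him⟩ := good_matMap (-1) 0 0 (-1) (-1) 0 0 (-1) (by decide)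
    refine ⟨_, hiso, him, ?_⟩
    rw [Fin.forall_fin_two, hε0, hε1]
    constructor <;> decide
  · obtain ⟨hiso, him⟩ := good_matMap 1 (gi-1) 0 (-1) 1 (gi-1) 0 (-1) (by decide)
    refine ⟨_, hiso, him, ?_⟩
    rw [Fin.forall_fin_two, hε0, hε1]
    constructor <;> decide
  · obtain ⟨hiso, him⟩ := good_matMap (-1) (1-gi) (-(1+gi)) 1 1 (gi-1) (1+gi) (-1) (by decide)
    refine ⟨_, hiso, him, ?_⟩
    rw [Fin.forall_fin_two, hε0, hε1]
    constructor <;> decide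
  · obtain ⟨hiso, him⟩ := good_matMap 1 (gi-1) (1+gi) (-1) (-1) (1-gi) (-(1+gi)) 1 (by decide)
    refine ⟨_, hiso, him, ?_⟩
    rw [Fin.forall_fin_two, hε0, hε1]
    constructor <;> decide
  · obtain ⟨hiso, him⟩ := good_matMap (-1) (1-gi) 0 1 (-1) (1-gi) 0 1 (by decide)
    refine ⟨_, hiso, him, ?_⟩
    rw [Fin.forall_fin_two, hε0, hε1]
    constructor <;> decide

/-- Every isometry `A ∈ Isom(L_z)` stabilizing `Fix(κ₃)` setwise
restricts to a signed permutation of the `ℤ`-basis `(v₁, v₂) = ((1+i, i), (0, −i))`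
of `Fix(κ₃)`, and conversely all eight signed permutations are realized by such
isometries.  Hence the setwise stabilizer of `Fix(κ₃)` in `Isom(L_z)` acts on
`Fix(κ₃)` through the dihedral group of order 8. -/
theorem stmt13 :
    letI v : Fin 2 → Lz := ![(1 + gi, gi), (0, -gi)]
    (∀ A : Lz → Lz, IsIsomLz A → A '' {w : Lz | kappa3 w = w} = {w : Lz | kappa3 w = w} →
      ∃ τ : Equiv.Perm (Fin 2), ∃ ε : Fin 2 → GaussianInt,
        (∀ j, ε j = 1 ∨ ε j = -1) ∧ ∀ j, A (v j) = ε j • v (τ j)) ∧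
    (∀ τ : Equiv.Perm (Fin 2), ∀ ε : Fin 2 → GaussianInt,
      (∀ j, ε j = 1 ∨ ε j = -1) →
      ∃ A : Lz → Lz, IsIsomLz A ∧
        A '' {w : Lz | kappa3 w = w} = {w : Lz | kappa3 w = w} ∧
        ∀ j, A (v j) = ε j • v (τ j)) := by
  exact ⟨fwd_aux, bwd_aux⟩
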